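/- Let V be an n-dimensional real inner product space (n ≥ 3), Rm an algebraic curvature tensor with curvature operator R̂ on Λ²V, and sec(P) = ⟨R̂P, P⟩ defined on the Grassmannian of 2-planes (identified with unit decomposable bivectors). If {e₁,…,e_n} is an orthonormal basis, then the 2-plane P = e₁∧e₂ is a critical point of sec if and only if Rm(e₁,e₂,e_i,e₂) = 0 and Rm(e₁,e₂,e₁,e_i) = 0 for all i = 3,…,n. -/

import Mathlib

open scoped RealInnerProductSpace

/-!
Along a curve of orthonormal pairs `(v, w)` through `(e₁, e₂)`, pair symmetry gives
`d/dt Rm(v, w, v, w) = 2 (Rm(e₁, e₂, v', e₂) + Rm(e₁, e₂, e₁, w'))`, where `v' ⊥ e₁` and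
`w' ⊥ e₂` because the curves have unit length. Expanding `v'` and `w'` in the basis, and using
`Rm(e₁, e₂, e₂, e₂) = Rm(e₁, e₂, e₁, e₁) = 0`, both terms vanish when the listed components do.
Conversely, rotating `e₁` (resp. `e₂`) towards `eᵢ` gives a curve along which the derivative is
`2 Rm(e₁, e₂, eᵢ, e₂)` (resp. `2 Rm(e₁, e₂, e₁, eᵢ)`).
-/

lemma LinearMap.hasDerivAt_apply₂ {E F G : Type*} [NormedAddCommGroup E] [NormedSpace ℝ E]
    [FiniteDimensional ℝ E] [NormedAddCommGroup F] [NormedSpace ℝ F] [FiniteDimensional ℝ F]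
    [NormedAddCommGroup G] [NormedSpace ℝ G] (f : E →ₗ[ℝ] F →ₗ[ℝ] G) {v : ℝ → E} {w : ℝ → F}
    {v' : E} {w' : F} {t : ℝ} (hv : HasDerivAt v v' t) (hw : HasDerivAt w w' t) :
    HasDerivAt (fun s => f (v s) (w s)) (f v' (w t) + f (v t) w') t :=
  (f.toContinuousBilinearMap.hasFDerivAt.comp_hasDerivAt t hv).clm_apply hw

section Derivative

variable {V : Type*} [NormedAddCommGroup V] [InnerProductSpace ℝ V]

lemma LinearMap.hasDerivAt_apply₄ [FiniteDimensional ℝ V]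
    (Rm : V →ₗ[ℝ] V →ₗ[ℝ] V →ₗ[ℝ] V →ₗ[ℝ] ℝ) {v w x y : ℝ → V} {v' w' x' y' : V} {t : ℝ}
    (hv : HasDerivAt v v' t) (hw : HasDerivAt w w' t) (hx : HasDerivAt x x' t)
    (hy : HasDerivAt y y' t) :
    HasDerivAt (fun s => Rm (v s) (w s) (x s) (y s))
      (Rm v' (w t) (x t) (y t) + Rm (v t) w' (x t) (y t)
        + Rm (v t) (w t) x' (y t) + Rm (v t) (w t) (x t) y') t := by
  -- view `Rm` as a bilinear map into the normed space of continuous bilinear forms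
  have hRm : IsBilinearMap ℝ fun v w => (Rm v w).toContinuousBilinearMap := by
    refine ⟨fun _ _ _ => ?_, fun _ _ _ => ?_, fun _ _ _ => ?_, fun _ _ _ => ?_⟩ <;>
      ext <;> simp
  exact ((LinearMap.hasDerivAt_apply₂ (G := V →L[ℝ] V →L[ℝ] ℝ) hRm.toLinearMap hv hw).clm_apply
    hx).clm_apply hy

lemma hasDerivAt_sec [FiniteDimensional ℝ V] {Rm : V →ₗ[ℝ] V →ₗ[ℝ] V →ₗ[ℝ] V →ₗ[ℝ] ℝ}
    (hpair : ∀ v w x y, Rm v w x y = Rm x y v w) {v w : ℝ → V} {v' w' : V} {t : ℝ}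
    (hv : HasDerivAt v v' t) (hw : HasDerivAt w w' t) :
    HasDerivAt (fun s => Rm (v s) (w s) (v s) (w s))
      (2 * (Rm (v t) (w t) v' (w t) + Rm (v t) (w t) (v t) w')) t := by
  convert Rm.hasDerivAt_apply₄ hv hw hv hw using 1
  rw [hpair v', hpair (v t) w']
  ring

lemma HasDerivAt.inner_eq_zero_of_inner_self_eq_one {v : ℝ → V} {v' : V} {t : ℝ}
    (hv : HasDerivAt v v' t) (hunit : ∀ s, ⟪v s, v s⟫ = 1) : ⟪v t, v'⟫ = 0 := by
  have hconst : HasDerivAt (fun s => ⟪v s, v s⟫) 0 t := by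
    simpa only [hunit] using hasDerivAt_const t (1 : ℝ)
  have h := (hv.inner ℝ hv).unique hconst
  rw [real_inner_comm] at h ⊢
  linarith

end Derivative

section Rotation

variable {V : Type*} [NormedAddCommGroup V] [InnerProductSpace ℝ V]

noncomputable def rotationCurve (a b : V) (t : ℝ) : V := Real.cos t • a + Real.sin t • b

lemma hasDerivAt_rotationCurve (a b : V) (t : ℝ) :
    HasDerivAt (rotationCurve a b) (-Real.sin t • a + Real.cos t • b) t :=
  ((Real.hasDerivAt_cos t).smul_const a).add ((Real.hasDerivAt_sin t).smul_const b)

lemma hasDerivAt_rotationCurve_zero (a b : V) : HasDerivAt (rotationCurve a b) b 0 := by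
  simpa using hasDerivAt_rotationCurve a b 0

lemma differentiable_rotationCurve (a b : V) : Differentiable ℝ (rotationCurve a b) :=
  fun t => (hasDerivAt_rotationCurve a b t).differentiableAt

@[simp]
lemma rotationCurve_zero (a b : V) : rotationCurve a b 0 = a := by
  simp [rotationCurve]

lemma inner_rotationCurve_self {a b : V} (ha : ⟪a, a⟫ = 1) (hb : ⟪b, b⟫ = 1) (hab : ⟪a, b⟫ = 0)
    (t : ℝ) : ⟪rotationCurve a b t, rotationCurve a b t⟫ = 1 := by
  simp only [rotationCurve, inner_add_left, inner_add_right, real_inner_smul_left,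
    real_inner_smul_right, ha, hb, hab, real_inner_comm a b]
  linear_combination Real.cos_sq_add_sin_sq t

lemma inner_rotationCurve_left {a b c : V} (ha : ⟪a, c⟫ = 0) (hb : ⟪b, c⟫ = 0) (t : ℝ) :
    ⟪rotationCurve a b t, c⟫ = 0 := by
  simp [rotationCurve, inner_add_left, real_inner_smul_left, ha, hb]

end Rotation

lemma OrthonormalBasis.apply_eq_zero_of_inner_eq_zero {V ι : Type*} [NormedAddCommGroup V]
    [InnerProductSpace ℝ V] [Fintype ι] (b : OrthonormalBasis ι ℝ V) (f : V →ₗ[ℝ] ℝ) {k : ι}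
    (hf : ∀ j, j ≠ k → f (b j) = 0) {x : V} (hx : ⟪b k, x⟫ = 0) : f x = 0 := by
  rw [← b.sum_repr' x, map_sum]
  refine Finset.sum_eq_zero fun j _ => ?_
  rcases eq_or_ne j k with rfl | hjk
  · simp [hx]
  · simp [hf j hjk]

section Critical

variable {V : Type*} [NormedAddCommGroup V] [InnerProductSpace ℝ V]

/-- Criticality of `sec(v ∧ w) = Rm(v, w, v, w)` at the plane `a ∧ b`, tested along curves of
orthonormal pairs. -/
def IsSecCritical (Rm : V →ₗ[ℝ] V →ₗ[ℝ] V →ₗ[ℝ] V →ₗ[ℝ] ℝ) (a b : V) : Prop :=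
  ∀ v w : ℝ → V, Differentiable ℝ v → Differentiable ℝ w → v 0 = a → w 0 = b →
    (∀ t, ⟪v t, v t⟫ = 1) → (∀ t, ⟪w t, w t⟫ = 1) → (∀ t, ⟪v t, w t⟫ = 0) →
    deriv (fun t => Rm (v t) (w t) (v t) (w t)) 0 = 0

lemma IsSecCritical.curvature_eq_zero [FiniteDimensional ℝ V] {ι : Type*}
    {Rm : V →ₗ[ℝ] V →ₗ[ℝ] V →ₗ[ℝ] V →ₗ[ℝ] ℝ}
    (hpair : ∀ v w x y, Rm v w x y = Rm x y v w) {e : ι → V} (he : Orthonormal ℝ e)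
    {k l i : ι} (hcrit : IsSecCritical Rm (e k) (e l)) (hkl : k ≠ l) (hik : i ≠ k)
    (hil : i ≠ l) :
    Rm (e k) (e l) (e i) (e l) = 0 ∧ Rm (e k) (e l) (e k) (e i) = 0 := by
  have hunit : ∀ j, ⟪e j, e j⟫ = 1 := fun j => by
    rw [real_inner_self_eq_norm_sq, he.norm_eq_one, one_pow]
  constructor
  · have hsec := hasDerivAt_sec hpair (hasDerivAt_rotationCurve_zero (e k) (e i))
      (hasDerivAt_const 0 (e l))
    have h := hcrit _ _ (differentiable_rotationCurve _ _) (differentiable_const _)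
      (rotationCurve_zero _ _) rfl
      (inner_rotationCurve_self (hunit k) (hunit i) (he.inner_eq_zero hik.symm))
      (fun _ => hunit l) (inner_rotationCurve_left (he.inner_eq_zero hkl) (he.inner_eq_zero hil))
    simp only [hsec.deriv, rotationCurve_zero, map_zero, add_zero] at h
    linarith
  · have hsec := hasDerivAt_sec hpair (hasDerivAt_const 0 (e k))
      (hasDerivAt_rotationCurve_zero (e l) (e i))
    have h := hcrit _ _ (differentiable_const _) (differentiable_rotationCurve _ _) rfl
      (rotationCurve_zero _ _) (fun _ => hunit k)
      (inner_rotationCurve_self (hunit l) (hunit i) (he.inner_eq_zero hil.symm))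
      fun t => by
        rw [real_inner_comm]
        exact inner_rotationCurve_left (he.inner_eq_zero hkl.symm) (he.inner_eq_zero hik) t
    simp only [hsec.deriv, rotationCurve_zero, map_zero, LinearMap.zero_apply, zero_add] at h
    linarith

lemma isSecCritical_of_curvature_eq_zero [FiniteDimensional ℝ V] {ι : Type*} [Fintype ι]
    {Rm : V →ₗ[ℝ] V →ₗ[ℝ] V →ₗ[ℝ] V →ₗ[ℝ] ℝ} (hsk2 : ∀ v w x y, Rm v w x y = -Rm v w y x)
    (hpair : ∀ v w x y, Rm v w x y = Rm x y v w) (b : OrthonormalBasis ι ℝ V) {k l : ι}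
    (hcurv : ∀ i, i ≠ k → i ≠ l →
      Rm (b k) (b l) (b i) (b l) = 0 ∧ Rm (b k) (b l) (b k) (b i) = 0) :
    IsSecCritical Rm (b k) (b l) := by
  intro v w hv hw hv0 hw0 hvv hww _
  have hdiag : ∀ x y z : V, Rm x y z z = 0 := fun x y z => by linarith [hsk2 x y z z]
  have hv' := (hv 0).hasDerivAt
  have hw' := (hw 0).hasDerivAt
  have hA : Rm (b k) (b l) (deriv v 0) (b l) = 0 := by
    refine b.apply_eq_zero_of_inner_eq_zero ((Rm (b k) (b l)).flip (b l)) (fun j hjk => ?_)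
      (hv0 ▸ hv'.inner_eq_zero_of_inner_self_eq_one hvv)
    rcases eq_or_ne j l with rfl | hjl
    · exact hdiag _ _ _
    · exact (hcurv j hjk hjl).1
  have hB : Rm (b k) (b l) (b k) (deriv w 0) = 0 := by
    refine b.apply_eq_zero_of_inner_eq_zero (Rm (b k) (b l) (b k)) (fun j hjl => ?_)
      (hw0 ▸ hw'.inner_eq_zero_of_inner_self_eq_one hww)
    rcases eq_or_ne j k with rfl | hjk
    · exact hdiag _ _ _
    · exact (hcurv j hjk hjl).2
  rw [(hasDerivAt_sec hpair hv' hw').deriv, hv0, hw0, hA, hB, add_zero, mul_zero]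

end Critical

/-- Let `V` be an `n`-dimensional real inner product space (`n ≥ 3`),
`Rm` an algebraic curvature tensor with curvature operator `R̂` on `Λ²V`, and
`sec(P) = ⟨R̂P,P⟩` the quadratic form on the Grassmannian `Gr₂(V)` of 2-planes
(identified with unit decomposable bivectors).  For an orthonormal basis
`{e₁,…,e_n}`, the 2-plane `P = e₁∧e₂` is a critical point of `sec` if and only if
`Rm(e₁,e₂,eᵢ,e₂) = 0` and `Rm(e₁,e₂,e₁,eᵢ) = 0` for all `i = 3,…,n`.

Criticality of `sec` at `P = e₁∧e₂` is expressed via curves in the Grassmannian: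
for orthonormal v, w spanning a 2-plane, `sec(v∧w) = Rm(v,w,v,w)`, and `P` is
critical iff for every differentiable curve `t ↦ (v t, w t)` of orthonormal pairs
with `(v 0, w 0) = (e₁, e₂)`, the derivative of `t ↦ Rm(v t, w t, v t, w t)` at
`0` vanishes. -/
theorem stmt_8 {V : Type*} [NormedAddCommGroup V] [InnerProductSpace ℝ V]
    [FiniteDimensional ℝ V] {n : ℕ} (hn : 3 ≤ n)
    (hdim : Module.finrank ℝ V = n)
    (Rm : V →ₗ[ℝ] V →ₗ[ℝ] V →ₗ[ℝ] V →ₗ[ℝ] ℝ)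
    (hsk2 : ∀ v w x y, Rm v w x y = -Rm v w y x)
    (hpair : ∀ v w x y, Rm v w x y = Rm x y v w)
    (e : Fin n → V) (he : Orthonormal ℝ e)
    (e1 : Fin n) (e2 : Fin n) (he1 : e1 = ⟨0, by omega⟩) (he2 : e2 = ⟨1, by omega⟩) :
    (∀ v w : ℝ → V, Differentiable ℝ v → Differentiable ℝ w →
        v 0 = e e1 → w 0 = e e2 →
        (∀ t, ⟪v t, v t⟫ = 1) → (∀ t, ⟪w t, w t⟫ = 1) → (∀ t, ⟪v t, w t⟫ = 0) →
        deriv (fun t => Rm (v t) (w t) (v t) (w t)) 0 = 0) ↔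
      (∀ i : Fin n, i ≠ e1 → i ≠ e2 →
        Rm (e e1) (e e2) (e i) (e e2) = 0 ∧ Rm (e e1) (e e2) (e e1) (e i) = 0) := by
  have h12 : e1 ≠ e2 := by simp [he1, he2]
  have hspan : ⊤ ≤ Submodule.span ℝ (Set.range e) :=
    (he.linearIndependent.span_eq_top_of_card_eq_finrank' (by simp [hdim])).ge
  have hb : ⇑(OrthonormalBasis.mk he hspan) = e := OrthonormalBasis.coe_mk he hspan
  refine ⟨fun hcrit _ hi1 hi2 => IsSecCritical.curvature_eq_zero hpair he hcrit h12 hi1 hi2,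
    fun hcurv => ?_⟩
  have hcrit := isSecCritical_of_curvature_eq_zero hsk2 hpair (OrthonormalBasis.mk he hspan)
    (k := e1) (l := e2) (by rwa [hb])
  rwa [hb] at hcrit
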